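/- arXiv:2108.00880 — 3 statements merged into one kernel-verified Lean document; each statement's English description precedes it below -/
import Mathlib

section
/- For every nondegenerate n-dimensional simplex S in ℝ^n, α(S) = Σ_{i=1}^{n} 1/d_i(S), where α(S) = α(Q_n;S) and d_i(S) is the i-th axial diameter of S. -/
open Set MeasureTheory Finset Metric

noncomputable section

/-- The unit cube `Q_n = [0,1]^n` in `ℝ^n`. -/
def unitCube (n : ℕ) : Set (EuclideanSpace ℝ (Fin n)) :=
  {x | ∀ i, x i ∈ Set.Icc (0 : ℝ) 1}

/-- The set of vertices of the unit cube `Q_n`. -/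
def cubeVertices (n : ℕ) : Set (EuclideanSpace ℝ (Fin n)) :=
  {x | ∀ i, x i = 0 ∨ x i = 1}

/-- The closed unit Euclidean ball `B_n` in `ℝ^n`. -/
def unitBall (n : ℕ) : Set (EuclideanSpace ℝ (Fin n)) :=
  Metric.closedBall 0 1

/-- Image of a set under the homothety with center `c` and ratio `σ`. -/
def homothet {n : ℕ} (c : EuclideanSpace ℝ (Fin n)) (σ : ℝ)
    (S : Set (EuclideanSpace ℝ (Fin n))) : Set (EuclideanSpace ℝ (Fin n)) :=
  (fun x => c + σ • (x - c)) '' S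

/-- The simplex with vertex set `v` (its convex hull). -/
def simplexSet {n : ℕ} (v : Fin (n + 1) → EuclideanSpace ℝ (Fin n)) :
    Set (EuclideanSpace ℝ (Fin n)) :=
  convexHull ℝ (Set.range v)

/-- The centroid (center of gravity) of the simplex with vertices `v`. -/
def simplexCentroid {n : ℕ} (v : Fin (n + 1) → EuclideanSpace ℝ (Fin n)) :
    EuclideanSpace ℝ (Fin n) :=
  Finset.univ.centroid ℝ v

/-- `σS`: homothetic copy of the simplex `S` with center at its centroid and ratio `σ`. -/
def simplexHomothet {n : ℕ} (v : Fin (n + 1) → EuclideanSpace ℝ (Fin n)) (σ : ℝ) :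
    Set (EuclideanSpace ℝ (Fin n)) :=
  homothet (simplexCentroid v) σ (simplexSet v)

/-- The absorption index `ξ(Ω;S)`: minimal `σ ≥ 1` with `Ω ⊆ σS`. -/
def xiInd {n : ℕ} (Ω : Set (EuclideanSpace ℝ (Fin n)))
    (v : Fin (n + 1) → EuclideanSpace ℝ (Fin n)) : ℝ :=
  sInf {σ : ℝ | 1 ≤ σ ∧ Ω ⊆ simplexHomothet v σ}

/-- `α(Ω;S)`: minimal `σ > 0` such that `Ω` is contained in a translate of `σS`. -/
def alphaInd {n : ℕ} (Ω : Set (EuclideanSpace ℝ (Fin n)))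
    (v : Fin (n + 1) → EuclideanSpace ℝ (Fin n)) : ℝ :=
  sInf {σ : ℝ | 0 < σ ∧ ∃ t : EuclideanSpace ℝ (Fin n),
    Ω ⊆ (fun x => t + x) '' simplexHomothet v σ}

/-- `lam` is the family of basic Lagrange polynomials of the simplex with vertices `v`:
affine maps with `lam j (v k) = δ_{jk}`. -/
def IsLagrangeBasis {n : ℕ} (v : Fin (n + 1) → EuclideanSpace ℝ (Fin n))
    (lam : Fin (n + 1) → (EuclideanSpace ℝ (Fin n) →ᵃ[ℝ] ℝ)) : Prop :=
  ∀ j k, lam j (v k) = if j = k then (1 : ℝ) else 0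

/-- The `i`-th axial diameter of a set: maximal length of a segment contained in it
and parallel to the `i`-th coordinate axis. -/
def axialDiameter {n : ℕ} (i : Fin n) (S : Set (EuclideanSpace ℝ (Fin n))) : ℝ :=
  sSup {t : ℝ | 0 ≤ t ∧ ∃ x, x ∈ S ∧ x + t • (EuclideanSpace.single i (1 : ℝ)) ∈ S}

/-- Norm of the interpolation projector with Lagrange basis `lam`, as an operator
`C(Ω) → C(Ω)`: it equals `max_{x ∈ Ω} Σ_j |λ_j(x)|`. -/
def projNorm {n : ℕ} (Ω : Set (EuclideanSpace ℝ (Fin n)))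
    (lam : Fin (n + 1) → (EuclideanSpace ℝ (Fin n) →ᵃ[ℝ] ℝ)) : ℝ :=
  sSup ((fun x => ∑ j, |lam j x|) '' Ω)

/-- `θ_n(Ω)`: the minimal norm of an interpolation projector with nodes in `Ω`. -/
def thetaMin (n : ℕ) (Ω : Set (EuclideanSpace ℝ (Fin n))) : ℝ :=
  sInf {t : ℝ | ∃ v : Fin (n + 1) → EuclideanSpace ℝ (Fin n),
    ∃ lam : Fin (n + 1) → (EuclideanSpace ℝ (Fin n) →ᵃ[ℝ] ℝ),
      AffineIndependent ℝ v ∧ (∀ j, v j ∈ Ω) ∧ IsLagrangeBasis v lam ∧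
      t = projNorm Ω lam}

/-- `ξ_n`: minimal absorption index of the unit cube by a contained nondegenerate simplex. -/
def xiMin (n : ℕ) : ℝ :=
  sInf {t : ℝ | ∃ v : Fin (n + 1) → EuclideanSpace ℝ (Fin n),
    AffineIndependent ℝ v ∧ simplexSet v ⊆ unitCube n ∧ t = xiInd (unitCube n) v}

/-- The standardized Legendre polynomial `χ_n` (Rodrigues formula). -/
def legendreChi (n : ℕ) (t : ℝ) : ℝ :=
  (1 / (2 ^ n * (n.factorial : ℝ))) * iteratedDeriv n (fun s : ℝ => (s ^ 2 - 1) ^ n) t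

/-- The inverse of `χ_n` on the half-axis `[1, +∞)`. -/
def legendreInv (n : ℕ) (y : ℝ) : ℝ :=
  Function.invFunOn (legendreChi n) (Set.Ici 1) y

/-- `ν_n`: the maximal volume of an `n`-dimensional simplex contained in `Q_n`. -/
def maxSimplexVol (n : ℕ) : ℝ :=
  sSup {t : ℝ | ∃ v : Fin (n + 1) → EuclideanSpace ℝ (Fin n),
    AffineIndependent ℝ v ∧ simplexSet v ⊆ unitCube n ∧
    t = (volume (simplexSet v)).toReal}

/-- `h_n`: the maximal determinant of an `n×n` matrix with entries in `{0,1}`. -/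
def maxDet01 (n : ℕ) : ℝ :=
  sSup {d : ℝ | ∃ M : Matrix (Fin n) (Fin n) ℝ,
    (∀ i j, M i j = 0 ∨ M i j = 1) ∧ d = M.det}

/-- `σ_n`: the volume of a regular `n`-dimensional simplex inscribed into `B_n`. -/
def regSimplexVol (n : ℕ) : ℝ :=
  sSup {t : ℝ | ∃ v : Fin (n + 1) → EuclideanSpace ℝ (Fin n),
    AffineIndependent ℝ v ∧ (∃ e : ℝ, ∀ j k, j ≠ k → dist (v j) (v k) = e) ∧
    (∀ j, ‖v j‖ = 1) ∧ t = (volume (simplexSet v)).toReal}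

end

/-! Let `λ_j` be the barycentric coordinates of `S` and `ℓ_{ji} = ∂λ_j/∂x_i`. If `x` and
`x + t e_i` lie in `S`, then `t ℓ_{ji}⁻ ≤ λ_j(x)` for every `j`, and summing over `j` gives
`t ≤ 1 / Σ_j ℓ_{ji}⁻`; the point with coordinates `ℓ_{ji}⁻ / Σ_k ℓ_{ki}⁻` attains the bound, so
`1/d_i(S) = Σ_j ℓ_{ji}⁻`. Next, `Q_n ⊆ t + σS` means `λ_j(x - t) ≥ (1 - σ)/(n + 1)` on `Q_n`
for all `j`; the minimum of `λ_j(x - t)` over the cube is `λ_j(-t) - Σ_i ℓ_{ji}⁻`, and since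
`Σ_j λ_j = 1` a translation `t` exists exactly when `σ ≥ Σ_i Σ_j ℓ_{ji}⁻`. -/

theorem Finset.sum_negPart_pos_of_sum_eq_zero {ι α : Type*} [AddCommGroup α] [LinearOrder α]
    [IsOrderedAddMonoid α] {s : Finset ι} {f : ι → α} (hsum : ∑ i ∈ s, f i = 0)
    (hne : ∃ i ∈ s, f i ≠ 0) : 0 < ∑ i ∈ s, (f i)⁻ := by
  obtain ⟨i, hi, hfi⟩ : ∃ i ∈ s, f i < 0 := by
    by_contra! hnonneg
    obtain ⟨i, hi, hfi⟩ := hne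
    exact hfi ((Finset.sum_eq_zero_iff_of_nonneg hnonneg).mp hsum i hi)
  calc 0 < (f i)⁻ := negPart_pos hfi
    _ ≤ ∑ i ∈ s, (f i)⁻ := Finset.single_le_sum (fun j _ => negPart_nonneg (f j)) hi

theorem neg_negPart_le_mul {x a : ℝ} (hx₀ : 0 ≤ x) (hx₁ : x ≤ 1) : -a⁻ ≤ x * a := by
  nlinarith [posPart_sub_negPart a, posPart_nonneg a, negPart_nonneg a]

theorem sInf_setOf_pos_and_le {a : ℝ} (ha : 0 ≤ a) : sInf {σ : ℝ | 0 < σ ∧ a ≤ σ} = a := by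
  rcases ha.eq_or_lt with rfl | ha
  · simp only [and_iff_left_of_imp le_of_lt]
    exact csInf_Ioi
  · simp only [and_iff_right_of_imp ha.trans_le]
    exact csInf_Ici

theorem AffineMap.apply_homothety {E : Type*} [AddCommGroup E] [Module ℝ E] (f : E →ᵃ[ℝ] ℝ)
    (c x : E) (r : ℝ) : f (homothety c r x) = (1 - r) * f c + r * f x := by
  rw [homothety_eq_lineMap, apply_lineMap, lineMap_apply_ring]

namespace AffineBasis

variable {ι E : Type*} [AddCommGroup E] [Module ℝ E] (b : AffineBasis ι ℝ E)

theorem coord_add (j : ι) (x v : E) : b.coord j (x + v) = b.coord j x + (b.coord j).linear v := by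
  simpa [vadd_eq_add, add_comm] using (b.coord j).map_vadd x v

theorem exists_coord_linear_ne_zero [Finite ι] {v : E} (hv : v ≠ 0) :
    ∃ j, (b.coord j).linear v ≠ 0 := by
  by_contra! h
  have hv₀ : 0 + v = 0 := b.ext_elem fun j => by rw [coord_add, h, add_zero]
  exact hv (by simpa using hv₀)

theorem mem_image_homothety_convexHull_iff (c : E) {σ : ℝ} (hσ : 0 < σ) (y : E) :
    y ∈ AffineMap.homothety c σ '' convexHull ℝ (range b) ↔
      ∀ j, (1 - σ) * b.coord j c ≤ b.coord j y := by
  simp only [b.convexHull_eq_nonneg_coord, mem_image, mem_ofPred_eq,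
    AffineMap.homothety_eq_iff_of_mul_eq_one (mul_inv_cancel₀ hσ.ne'), exists_eq_right',
    AffineMap.apply_homothety]
  refine forall_congr' fun j => ?_
  have hscale : σ * ((1 - σ⁻¹) * b.coord j c + σ⁻¹ * b.coord j y)
      = b.coord j y - (1 - σ) * b.coord j c := by
    field_simp
    ring
  rw [← mul_le_mul_iff_right₀ hσ, mul_zero, hscale, sub_nonneg]

variable [Fintype ι]

theorem sum_coord_linear (v : E) : ∑ j, (b.coord j).linear v = 0 := by
  have h := b.sum_coord_apply_eq_one (0 + v)
  simp only [coord_add, Finset.sum_add_distrib, b.sum_coord_apply_eq_one] at h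
  linarith

theorem exists_coord_eq (w : ι → ℝ) (hw : ∑ j, w j = 1) : ∃ p, ∀ j, b.coord j p = w j :=
  ⟨Finset.univ.affineCombination ℝ b w, fun _ => b.coord_apply_combination_of_mem (mem_univ _) hw⟩

theorem isGreatest_segment_convexHull {v : E} (hv : v ≠ 0) :
    IsGreatest
      {t : ℝ | 0 ≤ t ∧ ∃ x, x ∈ convexHull ℝ (range b) ∧ x + t • v ∈ convexHull ℝ (range b)}
      (∑ j, ((b.coord j).linear v)⁻)⁻¹ := by
  set N := ∑ j, ((b.coord j).linear v)⁻
  have hN : 0 < N := by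
    obtain ⟨j, hj⟩ := b.exists_coord_linear_ne_zero hv
    exact Finset.sum_negPart_pos_of_sum_eq_zero (b.sum_coord_linear v) ⟨j, mem_univ j, hj⟩
  simp only [b.convexHull_eq_nonneg_coord, mem_ofPred_eq, coord_add, map_smul, smul_eq_mul]
  constructor
  · obtain ⟨p, hp⟩ := b.exists_coord_eq (fun j => ((b.coord j).linear v)⁻ / N)
      (by rw [← Finset.sum_div, div_self hN.ne'])
    refine ⟨by positivity, p, fun j => ?_, fun j => ?_⟩
    · rw [hp]; positivity
    · have hpos : ((b.coord j).linear v)⁻ / N + N⁻¹ * (b.coord j).linear v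
          = ((b.coord j).linear v)⁺ / N := by
        linear_combination (-N⁻¹) * posPart_sub_negPart ((b.coord j).linear v)
      rw [hp, hpos]; positivity
  · rintro t ⟨ht, x, hx, hxt⟩
    have hterm (j : ι) : t * ((b.coord j).linear v)⁻ ≤ b.coord j x := by
      rcases le_total 0 ((b.coord j).linear v) with hℓ | hℓ
      · rw [negPart_eq_zero.mpr hℓ, mul_zero]; exact hx j
      · rw [negPart_eq_neg.mpr hℓ]; linarith [hxt j]
    have hsum := Finset.sum_le_sum fun j (_ : j ∈ Finset.univ) => hterm j
    rw [← Finset.mul_sum, b.sum_coord_apply_eq_one] at hsum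
    rw [← one_div, le_div_iff₀ hN]
    exact hsum

end AffineBasis

section EuclideanSpace

variable {n : ℕ}

theorem homothet_eq_image_homothety (c : EuclideanSpace ℝ (Fin n)) (σ : ℝ)
    (S : Set (EuclideanSpace ℝ (Fin n))) : homothet c σ S = AffineMap.homothety c σ '' S := by
  simp only [homothet, AffineMap.coe_homothety, vsub_eq_sub, vadd_eq_add, add_comm]

theorem EuclideanSpace.linearMap_apply_eq_sum {ι : Type*} [Fintype ι] [DecidableEq ι]
    (f : EuclideanSpace ℝ ι →ₗ[ℝ] ℝ) (x : EuclideanSpace ℝ ι) :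
    f x = ∑ i, x i * f (EuclideanSpace.single i 1) := by
  conv_lhs => rw [← (EuclideanSpace.basisFun ι ℝ).sum_repr x]
  simp [EuclideanSpace.basisFun_apply]

theorem isLeast_sum_mul_unitCube (a : Fin n → ℝ) :
    IsLeast ((fun x : EuclideanSpace ℝ (Fin n) => ∑ i, x i * a i) '' unitCube n)
      (-∑ i, (a i)⁻) := by
  constructor
  · refine ⟨WithLp.toLp 2 fun i => if 0 ≤ a i then 0 else 1, fun i => ?_, ?_⟩
    · dsimp only
      split_ifs <;> simp
    · dsimp only
      rw [← Finset.sum_neg_distrib]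
      refine Finset.sum_congr rfl fun i _ => ?_
      split_ifs with ha
      · simp [negPart_eq_zero.mpr ha]
      · simp [negPart_eq_neg.mpr (not_le.mp ha).le]
  · rintro _ ⟨x, hx, rfl⟩
    rw [← Finset.sum_neg_distrib]
    exact Finset.sum_le_sum fun i _ => neg_negPart_le_mul (hx i).1 (hx i).2

end EuclideanSpace

namespace AffineBasis

variable {n : ℕ} (b : AffineBasis (Fin (n + 1)) ℝ (EuclideanSpace ℝ (Fin n)))

noncomputable def coordPartial (j : Fin (n + 1)) (i : Fin n) : ℝ :=
  (b.coord j).linear (EuclideanSpace.single i 1)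

theorem coord_add_eq_sum (j : Fin (n + 1)) (p x : EuclideanSpace ℝ (Fin n)) :
    b.coord j (p + x) = b.coord j p + ∑ i, x i * b.coordPartial j i := by
  rw [coord_add, EuclideanSpace.linearMap_apply_eq_sum]
  rfl

theorem axialDiameter_simplexSet (i : Fin n) :
    axialDiameter i (simplexSet b) = (∑ j, (b.coordPartial j i)⁻)⁻¹ :=
  (b.isGreatest_segment_convexHull (by simp)).csSup_eq

theorem mem_simplexHomothet_iff {σ : ℝ} (hσ : 0 < σ) (y : EuclideanSpace ℝ (Fin n)) :
    y ∈ simplexHomothet b σ ↔ ∀ j, (1 - σ) / (n + 1) ≤ b.coord j y := by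
  rw [simplexHomothet, homothet_eq_image_homothety, simplexSet,
    b.mem_image_homothety_convexHull_iff _ hσ, simplexCentroid]
  refine forall_congr' fun j => ?_
  rw [b.coord_apply_centroid (mem_univ j), card_univ, Fintype.card_fin, div_eq_mul_inv]
  norm_cast

theorem exists_translate_unitCube_subset_simplexHomothet_iff {σ : ℝ} (hσ : 0 < σ) :
    (∃ t, unitCube n ⊆ (fun x => t + x) '' simplexHomothet b σ) ↔
      ∑ i, ∑ j, (b.coordPartial j i)⁻ ≤ σ := by
  set α := ∑ i, ∑ j, (b.coordPartial j i)⁻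
  have hconst (c : ℝ) : ∑ _j : Fin (n + 1), c / (n + 1) = c := by
    rw [Finset.sum_const, Finset.card_univ, Fintype.card_fin, nsmul_eq_mul]
    push_cast
    field_simp
  simp only [Set.image_add_left, Set.subset_def, Set.mem_preimage, b.mem_simplexHomothet_iff hσ,
    coord_add_eq_sum]
  constructor
  · rintro ⟨t, ht⟩
    have hj (j : Fin (n + 1)) :
        (1 - σ) / (n + 1) ≤ b.coord j (-t) - ∑ i, (b.coordPartial j i)⁻ := by
      obtain ⟨x, hx, hxmin⟩ := (isLeast_sum_mul_unitCube (b.coordPartial j)).1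
      linarith [ht x hx j]
    have hsum := Finset.sum_le_sum fun j (_ : j ∈ Finset.univ) => hj j
    rw [Finset.sum_sub_distrib, b.sum_coord_apply_eq_one, Finset.sum_comm, hconst] at hsum
    linarith
  · intro hα
    obtain ⟨p, hp⟩ := b.exists_coord_eq (fun j => (1 - α) / (n + 1) + ∑ i, (b.coordPartial j i)⁻)
      (by rw [Finset.sum_add_distrib, hconst, Finset.sum_comm]; ring)
    refine ⟨-p, fun x hx j => ?_⟩
    have hmin := (isLeast_sum_mul_unitCube (b.coordPartial j)).2 ⟨x, hx, rfl⟩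
    have hσα : (1 - σ) / (n + 1) ≤ (1 - α) / (n + 1) := by gcongr
    rw [neg_neg, hp]
    linarith

theorem alphaInd_unitCube :
    alphaInd (unitCube n) b = ∑ i, ∑ j, (b.coordPartial j i)⁻ := by
  have hα : 0 ≤ ∑ i, ∑ j, (b.coordPartial j i)⁻ :=
    Finset.sum_nonneg fun i _ => Finset.sum_nonneg fun j _ => negPart_nonneg _
  rw [alphaInd, ← sInf_setOf_pos_and_le hα]
  congr 1
  ext σ
  exact and_congr_right b.exists_translate_unitCube_subset_simplexHomothet_iff

end AffineBasis

theorem alpha_eq_sum_inv_axialDiameters_general (n : ℕ)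
    (v : Fin (n + 1) → EuclideanSpace ℝ (Fin n)) (hv : AffineIndependent ℝ v) :
    alphaInd (unitCube n) v = ∑ i : Fin n, 1 / axialDiameter i (simplexSet v) := by
  let b : AffineBasis (Fin (n + 1)) ℝ (EuclideanSpace ℝ (Fin n)) :=
    ⟨v, hv, hv.affineSpan_eq_top_iff_card_eq_finrank_add_one.mpr (by simp)⟩
  change alphaInd (unitCube n) b = ∑ i, 1 / axialDiameter i (simplexSet b)
  simp only [b.alphaInd_unitCube, b.axialDiameter_simplexSet, one_div, inv_inv]

/-- For every nondegenerate simplex `S` in `ℝ^n`,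
`α(S) = Σ_{i=1}^n 1/d_i(S)` where `α(S) = α(Q_n;S)` and `d_i` the axial diameters. -/
theorem alpha_eq_sum_inv_axialDiameters (n : ℕ) (hn : 0 < n)
    (v : Fin (n + 1) → EuclideanSpace ℝ (Fin n)) (hv : AffineIndependent ℝ v) :
    alphaInd (unitCube n) v = ∑ i : Fin n, 1 / axialDiameter i (simplexSet v) :=
  alpha_eq_sum_inv_axialDiameters_general n v hv
end

section
/- Let S be a nondegenerate n-dimensional simplex in ℝ^n with basic Lagrange polynomial coefficients (l_{ij}). Then for every i = 1,…,n, 1/d_i(S) = (1/2)·Σ_{j=1}^{n+1} |l_{ij}|, where d_i(S) is the i-th axial diameter of S. -/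
open Set MeasureTheory Finset Metric

/-! Along the direction `u`, the barycentric coordinate `λ_j` changes at the constant rate
`c_j = λ_j.linear u`, and `∑ c_j = 0` because `∑ λ_j = 1`. If both `x` and `x + t u` lie in the
simplex, then `t |c_j| ≤ 2 λ_j(x) + t c_j` for every `j` (use `λ_j(x) ≥ 0` when `c_j ≥ 0` and
`λ_j(x + t u) ≥ 0` when `c_j < 0`); summing gives `t ∑ |c_j| ≤ 2`. Equality is attained from the
point with barycentric coordinates `(|c_j| - c_j) / ∑ |c_k|`. For `u = e_i` one has `c_j = l_{ij}`. -/

theorem AffineMap.apply_add_smul {k E : Type*} [CommRing k] [AddCommGroup E] [Module k E]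
    (f : E →ᵃ[k] k) (x u : E) (t : k) : f (x + t • u) = f x + t * f.linear u := by
  rw [add_comm x, ← vadd_eq_add, f.map_vadd, map_smul, vadd_eq_add, smul_eq_mul, add_comm]

namespace AffineBasis

variable {ι E : Type*} [AddCommGroup E] [Module ℝ E] (B : AffineBasis ι ℝ E)

theorem eq_coord_of_apply_eq_ite [DecidableEq ι] {f : E →ᵃ[ℝ] ℝ} {j : ι}
    (hf : ∀ k, f (B k) = if j = k then 1 else 0) : f = B.coord j :=
  AffineMap.ext_on B.tot <| by
    rintro _ ⟨k, rfl⟩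
    rw [hf, B.coord_apply]

variable [Fintype ι]

theorem sum_coord_linear_eq_zero (u : E) : ∑ j, (B.coord j).linear u = 0 := by
  have h := B.sum_coord_apply_eq_one (0 + (1 : ℝ) • u)
  simp only [AffineMap.apply_add_smul, one_mul, sum_add_distrib, B.sum_coord_apply_eq_one] at h
  linarith

theorem sum_abs_coord_linear_pos {u : E} (hu : u ≠ 0) : 0 < ∑ j, |(B.coord j).linear u| := by
  refine (sum_nonneg fun j _ => abs_nonneg _).lt_of_ne fun h => hu ?_
  have hc : ∀ j, (B.coord j).linear u = 0 := fun j =>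
    abs_eq_zero.mp ((sum_eq_zero_iff_of_nonneg fun j _ => abs_nonneg _).mp h.symm j (mem_univ j))
  have hcoord : ∀ j, B.coord j (0 + (1 : ℝ) • u) = B.coord j 0 := fun j => by
    rw [AffineMap.apply_add_smul, hc, mul_zero, add_zero]
  simpa using B.ext_elem hcoord

theorem mul_sum_abs_coord_linear_le_two {x u : E} {t : ℝ} (hx : x ∈ convexHull ℝ (range B))
    (hxt : x + t • u ∈ convexHull ℝ (range B)) : t * ∑ j, |(B.coord j).linear u| ≤ 2 := by
  rw [B.convexHull_eq_nonneg_coord] at hx hxt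
  have hj : ∀ j, t * |(B.coord j).linear u| ≤ 2 * B.coord j x + t * (B.coord j).linear u := by
    intro j
    have hxt_j := hxt j
    rw [AffineMap.apply_add_smul] at hxt_j
    rcases abs_cases ((B.coord j).linear u) with ⟨habs, -⟩ | ⟨habs, -⟩ <;> rw [habs] <;>
      linarith [hx j]
  calc t * ∑ j, |(B.coord j).linear u|
      ≤ ∑ j, (2 * B.coord j x + t * (B.coord j).linear u) := by
        rw [mul_sum]; exact sum_le_sum fun j _ => hj j
    _ = 2 := by
        rw [sum_add_distrib, ← mul_sum, ← mul_sum, B.sum_coord_apply_eq_one,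
          B.sum_coord_linear_eq_zero, mul_zero, mul_one, add_zero]

theorem exists_mem_convexHull_add_smul_mem {u : E} (hu : u ≠ 0) :
    ∃ x ∈ convexHull ℝ (range B),
      x + (2 / ∑ j, |(B.coord j).linear u|) • u ∈ convexHull ℝ (range B) := by
  set c : ι → ℝ := fun j => (B.coord j).linear u
  set D := ∑ j, |c j|
  have hD : 0 < D := B.sum_abs_coord_linear_pos hu
  set w : ι → ℝ := fun j => (|c j| - c j) / D
  have hw : ∑ j, w j = 1 := by
    rw [← sum_div, sum_sub_distrib, B.sum_coord_linear_eq_zero, sub_zero, div_self hD.ne']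
  have hcoord : ∀ j, B.coord j (univ.affineCombination ℝ B w) = w j := fun j =>
    B.coord_apply_combination_of_mem (mem_univ j) hw
  refine ⟨univ.affineCombination ℝ B w, ?_, ?_⟩ <;> rw [B.convexHull_eq_nonneg_coord] <;> intro j
  · rw [hcoord]
    exact div_nonneg (sub_nonneg.mpr (le_abs_self _)) hD.le
  · rw [AffineMap.apply_add_smul, hcoord]
    have : w j + 2 / D * c j = (|c j| + c j) / D := by simp only [w]; field_simp; ring
    rw [this]
    exact div_nonneg (by linarith [neg_abs_le (c j)]) hD.le

theorem isGreatest_segment_length {u : E} (hu : u ≠ 0) :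
    IsGreatest {t : ℝ | 0 ≤ t ∧ ∃ x ∈ convexHull ℝ (range B), x + t • u ∈ convexHull ℝ (range B)}
      (2 / ∑ j, |(B.coord j).linear u|) := by
  have hD := B.sum_abs_coord_linear_pos hu
  refine ⟨⟨by positivity, B.exists_mem_convexHull_add_smul_mem hu⟩, ?_⟩
  rintro t ⟨-, x, hx, hxt⟩
  rw [le_div_iff₀ hD]
  exact B.mul_sum_abs_coord_linear_le_two hx hxt

end AffineBasis

theorem inv_axialDiameter_eq_half_sum_abs_coeff_general (n : ℕ)
    (v : Fin (n + 1) → EuclideanSpace ℝ (Fin n)) (hv : AffineIndependent ℝ v)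
    (l : Fin n → Fin (n + 1) → ℝ) (b : Fin (n + 1) → ℝ)
    (lam : Fin (n + 1) → (EuclideanSpace ℝ (Fin n) →ᵃ[ℝ] ℝ))
    (hlam : IsLagrangeBasis v lam)
    (hcoef : ∀ j x, lam j x = (∑ i : Fin n, l i j * x i) + b j) :
    ∀ i : Fin n, 1 / axialDiameter i (simplexSet v) =
      (1 / 2) * ∑ j : Fin (n + 1), |l i j| := by
  intro i
  have hspan : affineSpan ℝ (range v) = ⊤ := by
    rw [hv.affineSpan_eq_top_iff_card_eq_finrank_add_one]
    simp
  let B : AffineBasis (Fin (n + 1)) ℝ (EuclideanSpace ℝ (Fin n)) := ⟨v, hv, hspan⟩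
  have hlin : ∀ j, (B.coord j).linear (EuclideanSpace.single i 1) = l i j := by
    intro j
    rw [← B.eq_coord_of_apply_eq_ite (hlam j), ← sub_zero (EuclideanSpace.single i (1 : ℝ)),
      ← vsub_eq_sub, AffineMap.linearMap_vsub, hcoef, hcoef]
    simp
  have hu : EuclideanSpace.single i (1 : ℝ) ≠ 0 := by simp
  rw [axialDiameter, simplexSet, show range v = range B from rfl,
    (B.isGreatest_segment_length hu).csSup_eq, one_div_div]
  simp only [hlin]
  ring

/-- For a nondegenerate simplex with Lagrange coefficients `l i j`
(so that `λ_j(x) = Σ_i l i j * x_i + b j`), for each `i`: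
`1/d_i(S) = (1/2)·Σ_{j=1}^{n+1} |l_{ij}|`. -/
theorem inv_axialDiameter_eq_half_sum_abs_coeff (n : ℕ) (hn : 0 < n)
    (v : Fin (n + 1) → EuclideanSpace ℝ (Fin n)) (hv : AffineIndependent ℝ v)
    (l : Fin n → Fin (n + 1) → ℝ) (b : Fin (n + 1) → ℝ)
    (lam : Fin (n + 1) → (EuclideanSpace ℝ (Fin n) →ᵃ[ℝ] ℝ))
    (hlam : IsLagrangeBasis v lam)
    (hcoef : ∀ j x, lam j x = (∑ i : Fin n, l i j * x i) + b j) :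
    ∀ i : Fin n, 1 / axialDiameter i (simplexSet v) =
      (1 / 2) * ∑ j : Fin (n + 1), |l i j| :=
  inv_axialDiameter_eq_half_sum_abs_coeff_general n v hv l b lam hlam hcoef
end

section
/- Suppose S is a nondegenerate n-dimensional simplex with S ⊆ Q_n ⊆ nS, with basic Lagrange polynomials λ_j and coefficients (l_{ij}). Then: (i) max_{x ∈ ver(Q_n)} λ_j(x) = 1 for every j = 1,…,n+1; (ii) max_{x ∈ ver(Q_n)} (−λ_j(x)) = (n−1)/(n+1) for every j = 1,…,n+1; (iii) the centroid of S equals (1/2,…,1/2), the center of Q_n; (iv) Σ_{j=1}^{n+1} |l_{ij}| = 2 for every i = 1,…,n; (v) Σ_{i=1}^{n} |l_{ij}| = 2n/(n+1) for every j = 1,…,n+1; (vi) (1/n)Q_n ⊆ S and nS ⊆ n²Q_n, where σQ_n denotes the homothet of Q_n about its center with ratio σ. -/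
open Set MeasureTheory Finset Metric

/-!
Write `M_j = ∑ᵢ l_{ij}⁺ + b_j` and `m_j = ∑ᵢ l_{ij}⁻ - b_j`; these are the maxima of `λ_j` and
`-λ_j` over `Q_n`, attained at vertices. Since `∑ⱼ λ_j = 1`, we have `∑ⱼ b_j = 1` and
`∑ⱼ l_{ij} = 0`, so every row of `(l_{ij})` has equal positive and negative mass
`r_i = ∑ⱼ l_{ij}⁺`. The two inclusions give three families of inequalities: `M_j ≥ λ_j(x^(j)) = 1`
because the vertices lie in `Q_n`; `m_j ≤ (n-1)/(n+1)` because `Q_n ⊆ nS`; and `r_i ≥ 1` because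
`1 = ∑ⱼ l_{ij} x^(j)_i` with every `x^(j)_i ∈ [0,1]`. Summing over `j`, `∑ⱼ m_j = ∑ᵢ r_i - 1 ≥ n - 1`
forces equality everywhere: `r_i = 1`, `m_j = (n-1)/(n+1)`, and then `∑ⱼ M_j = n + 1` gives `M_j = 1`.
The rest is read off. At the center of `Q_n`, `λ_j = (M_j - m_j)/2 = 1/(n+1)`, which is its value at
the centroid. The absolute sums are `2 r_i` and `M_j + m_j`. Once the two centers agree, (vi)
follows from `Q_n ⊆ nS` and `S ⊆ Q_n ⊆ nQ_n`.
-/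

theorem sum_mul_le_sum_posPart {ι : Type*} [Fintype ι] (a x : ι → ℝ)
    (hx : ∀ i, x i ∈ Icc (0 : ℝ) 1) : ∑ i, a i * x i ≤ ∑ i, (a i)⁺ := by
  refine Finset.sum_le_sum fun i _ => ?_
  rcases le_total (a i) 0 with ha | ha
  · rw [posPart_eq_zero.mpr ha]
    exact mul_nonpos_of_nonpos_of_nonneg ha (hx i).1
  · rw [posPart_eq_self.mpr ha]
    exact mul_le_of_le_one_right ha (hx i).2

theorem sum_mul_ite_pos_eq_sum_posPart {ι : Type*} [Fintype ι] (a : ι → ℝ) :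
    ∑ i, a i * (if 0 < a i then 1 else 0) = ∑ i, (a i)⁺ := by
  refine Finset.sum_congr rfl fun i _ => ?_
  split_ifs with ha
  · rw [mul_one, posPart_eq_self.mpr ha.le]
  · rw [mul_zero, posPart_eq_zero.mpr (not_lt.mp ha)]

theorem sum_negPart_eq_sum_posPart {ι : Type*} [Fintype ι] {a : ι → ℝ}
    (ha : ∑ i, a i = 0) : ∑ i, (a i)⁻ = ∑ i, (a i)⁺ := by
  have h : ∑ i, ((a i)⁺ - (a i)⁻) = 0 := by simpa only [posPart_sub_negPart] using ha
  rw [Finset.sum_sub_distrib] at h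
  linarith

theorem sum_abs_eq_sum_posPart_add_sum_negPart {ι : Type*} [Fintype ι] (a : ι → ℝ) :
    ∑ i, |a i| = ∑ i, (a i)⁺ + ∑ i, (a i)⁻ := by
  simp only [← posPart_add_negPart, Finset.sum_add_distrib]

theorem coeff_sums_eq_of_bounds {n : ℕ} {l : Fin n → Fin (n + 1) → ℝ} {b : Fin (n + 1) → ℝ}
    (hb : ∑ j, b j = 1) (hl : ∀ i, ∑ j, l i j = 0)
    (hrow : ∀ i, 1 ≤ ∑ j, (l i j)⁺)
    (hmax : ∀ j, 1 ≤ ∑ i, (l i j)⁺ + b j)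
    (hmin : ∀ j, ∑ i, (l i j)⁻ - b j ≤ ((n : ℝ) - 1) / ((n : ℝ) + 1)) :
    (∀ i, ∑ j, (l i j)⁺ = 1) ∧ (∀ j, ∑ i, (l i j)⁺ + b j = 1) ∧
      ∀ j, ∑ i, (l i j)⁻ - b j = ((n : ℝ) - 1) / ((n : ℝ) + 1) := by
  have hneg (i : Fin n) : ∑ j, (l i j)⁻ = ∑ j, (l i j)⁺ := sum_negPart_eq_sum_posPart (hl i)
  have hsum_min : ∑ j, (∑ i, (l i j)⁻ - b j) = ∑ i, ∑ j, (l i j)⁺ - 1 := by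
    rw [Finset.sum_sub_distrib, Finset.sum_comm, hb]
    simp only [hneg]
  have hsum_max : ∑ j, (∑ i, (l i j)⁺ + b j) = ∑ i, ∑ j, (l i j)⁺ + 1 := by
    rw [Finset.sum_add_distrib, Finset.sum_comm, hb]
  have hconst : ∑ _j : Fin (n + 1), ((n : ℝ) - 1) / ((n : ℝ) + 1) = (n : ℝ) - 1 := by
    simp only [Finset.sum_const, Finset.card_univ, Fintype.card_fin, nsmul_eq_mul]
    push_cast
    field_simp
  have hones (m : ℕ) : ∑ _k : Fin m, (1 : ℝ) = m := by simp
  have hrows : ∑ _i : Fin n, (1 : ℝ) ≤ ∑ i, ∑ j, (l i j)⁺ := Finset.sum_le_sum fun i _ => hrow i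
  have hmins : ∑ j, (∑ i, (l i j)⁻ - b j) ≤ ∑ _j : Fin (n + 1), ((n : ℝ) - 1) / ((n : ℝ) + 1) :=
    Finset.sum_le_sum fun j _ => hmin j
  rw [hones] at hrows
  rw [hsum_min, hconst] at hmins
  have hrows_eq : ∑ i, ∑ j, (l i j)⁺ = ∑ _i : Fin n, (1 : ℝ) := by
    rw [hones]
    linarith
  refine ⟨fun i => ?_, fun j => ?_, fun j => ?_⟩
  · exact ((Finset.sum_eq_sum_iff_of_le fun i _ => hrow i).mp hrows_eq.symm i
      (Finset.mem_univ i)).symm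
  · refine ((Finset.sum_eq_sum_iff_of_le fun j _ => hmax j).mp ?_ j (Finset.mem_univ j)).symm
    rw [hsum_max, hrows_eq, hones, hones]
    push_cast
    ring
  · refine (Finset.sum_eq_sum_iff_of_le fun j _ => hmin j).mp ?_ j (Finset.mem_univ j)
    rw [hsum_min, hrows_eq, hones, hconst]

section Cube

variable {n : ℕ}

noncomputable def cubeCenter (n : ℕ) : EuclideanSpace ℝ (Fin n) :=
  (2 : ℝ)⁻¹ • ∑ i : Fin n, EuclideanSpace.single i (1 : ℝ)

theorem cubeCenter_apply (i : Fin n) : cubeCenter n i = 1 / 2 := by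
  simp [cubeCenter]

theorem cubeCenter_mem_unitCube : cubeCenter n ∈ unitCube n := fun i => by
  rw [cubeCenter_apply]
  constructor <;> norm_num

theorem convex_unitCube : Convex ℝ (unitCube n) := by
  intro x hx y hy s t hs ht hst i
  obtain ⟨hx0, hx1⟩ := hx i
  obtain ⟨hy0, hy1⟩ := hy i
  simp only [PiLp.add_apply, PiLp.smul_apply, smul_eq_mul]
  constructor <;> nlinarith

theorem cubeVertices_subset_unitCube : cubeVertices n ⊆ unitCube n := by
  intro x hx i
  rcases hx i with h | h <;> simp [h]

variable {f : EuclideanSpace ℝ (Fin n) → ℝ} {a : Fin n → ℝ} {c : ℝ}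

theorem isGreatest_image_cubeVertices (hf : ∀ x, f x = ∑ i, a i * x i + c) :
    IsGreatest (f '' cubeVertices n) (∑ i, (a i)⁺ + c) := by
  refine ⟨⟨WithLp.toLp 2 fun i => if 0 < a i then 1 else 0, fun i => ?_, ?_⟩, ?_⟩
  · by_cases h : 0 < a i <;> simp [h]
  · rw [hf, ← sum_mul_ite_pos_eq_sum_posPart]
  · rintro _ ⟨x, hx, rfl⟩
    rw [hf]
    exact add_le_add_left (sum_mul_le_sum_posPart a x (cubeVertices_subset_unitCube hx)) c

theorem le_sum_posPart_of_mem_unitCube (hf : ∀ x, f x = ∑ i, a i * x i + c) {x : EuclideanSpace ℝ (Fin n)}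
    (hx : x ∈ unitCube n) : f x ≤ ∑ i, (a i)⁺ + c := by
  rw [hf]
  exact add_le_add_left (sum_mul_le_sum_posPart a x hx) c

theorem isGreatest_neg_image_cubeVertices (hf : ∀ x, f x = ∑ i, a i * x i + c) :
    IsGreatest ((fun x => -f x) '' cubeVertices n) (∑ i, (a i)⁻ - c) := by
  have hf' : ∀ x, -f x = ∑ i, -a i * x i + -c := fun x => by
    simp only [hf, neg_mul, Finset.sum_neg_distrib, neg_add]
  simpa only [posPart_neg, ← sub_eq_add_neg] using isGreatest_image_cubeVertices hf'

end Cube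

section Homothety

variable {n : ℕ} {c : EuclideanSpace ℝ (Fin n)} {S T : Set (EuclideanSpace ℝ (Fin n))}

theorem homothet_homothet (σ τ : ℝ) (S : Set (EuclideanSpace ℝ (Fin n))) :
    homothet c σ (homothet c τ S) = homothet c (σ * τ) S := by
  simp only [homothet, Set.image_image, add_sub_cancel_left, smul_smul]

theorem homothet_one (S : Set (EuclideanSpace ℝ (Fin n))) : homothet c 1 S = S := by
  simp [homothet]

theorem homothet_mono {σ : ℝ} (h : S ⊆ T) : homothet c σ S ⊆ homothet c σ T :=
  Set.image_mono h

theorem homothet_inv_subset_of_subset_homothet {σ : ℝ} (hσ : σ ≠ 0) (h : T ⊆ homothet c σ S) :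
    homothet c (1 / σ) T ⊆ S := by
  calc homothet c (1 / σ) T ⊆ homothet c (1 / σ) (homothet c σ S) := homothet_mono h
    _ = S := by rw [homothet_homothet, one_div_mul_cancel hσ, homothet_one]

theorem subset_homothet_of_one_le {K : Set (EuclideanSpace ℝ (Fin n))} (hK : Convex ℝ K)
    (hc : c ∈ K) {σ : ℝ} (hσ : 1 ≤ σ) : K ⊆ homothet c σ K := by
  intro x hx
  have hσ0 : σ ≠ 0 := by positivity
  refine ⟨c + σ⁻¹ • (x - c), hK.add_smul_sub_mem hc hx ⟨by positivity, inv_le_one_of_one_le₀ hσ⟩, ?_⟩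
  simp only [add_sub_cancel_left, smul_inv_smul₀ hσ0, add_sub_cancel]

end Homothety

theorem AffineMap.apply_add_smul_sub {E : Type*} [AddCommGroup E] [Module ℝ E] (f : E →ᵃ[ℝ] ℝ)
    (c x : E) (σ : ℝ) : f (c + σ • (x - c)) = σ * f x + (1 - σ) * f c := by
  have h := f.apply_lineMap c x σ
  rw [AffineMap.lineMap_apply_module, AffineMap.lineMap_apply_module] at h
  rw [show c + σ • (x - c) = (1 - σ) • c + σ • x by module, h, smul_eq_mul, smul_eq_mul]
  ring

section Lagrange

variable {n : ℕ} {v : Fin (n + 1) → EuclideanSpace ℝ (Fin n)}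
  {lam : Fin (n + 1) → EuclideanSpace ℝ (Fin n) →ᵃ[ℝ] ℝ}

def simplexBasis (hv : AffineIndependent ℝ v) :
    AffineBasis (Fin (n + 1)) ℝ (EuclideanSpace ℝ (Fin n)) :=
  ⟨v, hv, hv.affineSpan_eq_top_iff_card_eq_finrank_add_one.mpr (by simp)⟩

namespace IsLagrangeBasis

theorem eq_coord (hlam : IsLagrangeBasis v lam) (hv : AffineIndependent ℝ v) (j : Fin (n + 1)) :
    lam j = (simplexBasis hv).coord j := by
  refine AffineMap.ext_on (simplexBasis hv).tot ?_
  rintro _ ⟨k, rfl⟩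
  exact (hlam j k).trans ((simplexBasis hv).coord_apply j k).symm

theorem sum_eq_one (hlam : IsLagrangeBasis v lam) (hv : AffineIndependent ℝ v)
    (x : EuclideanSpace ℝ (Fin n)) : ∑ j, lam j x = 1 := by
  simp only [hlam.eq_coord hv, AffineBasis.sum_coord_apply_eq_one]

theorem sum_smul_eq (hlam : IsLagrangeBasis v lam) (hv : AffineIndependent ℝ v)
    (x : EuclideanSpace ℝ (Fin n)) : ∑ j, lam j x • v j = x := by
  simp only [hlam.eq_coord hv]
  exact (simplexBasis hv).linear_combination_coord_eq_self x

theorem ext (hlam : IsLagrangeBasis v lam) (hv : AffineIndependent ℝ v)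
    {x y : EuclideanSpace ℝ (Fin n)} (h : ∀ j, lam j x = lam j y) : x = y :=
  (simplexBasis hv).ext_elem fun j => by simpa only [hlam.eq_coord hv] using h j

theorem mem_simplexSet_iff (hlam : IsLagrangeBasis v lam) (hv : AffineIndependent ℝ v)
    {x : EuclideanSpace ℝ (Fin n)} : x ∈ simplexSet v ↔ ∀ j, 0 ≤ lam j x := by
  rw [simplexSet, show Set.range v = Set.range (simplexBasis hv) from rfl,
    AffineBasis.convexHull_eq_nonneg_coord]
  simp only [Set.mem_ofPred_eq, hlam.eq_coord hv]

theorem apply_centroid (hlam : IsLagrangeBasis v lam) (j : Fin (n + 1)) :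
    lam j (simplexCentroid v) = 1 / ((n : ℝ) + 1) := by
  have hw : ∑ k, (Finset.univ.centroidWeights ℝ : Fin (n + 1) → ℝ) k = 1 :=
    Finset.univ.sum_centroidWeights_eq_one_of_card_ne_zero ℝ (by simp)
  rw [simplexCentroid, Finset.centroid_def, Finset.map_affineCombination _ v _ hw,
    Finset.univ.affineCombination_eq_linear_combination _ _ hw]
  simp [hlam j, Finset.centroidWeights_apply]

theorem apply_homothet_centroid (hlam : IsLagrangeBasis v lam) (j : Fin (n + 1))
    (x : EuclideanSpace ℝ (Fin n)) (σ : ℝ) :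
    lam j (simplexCentroid v + σ • (x - simplexCentroid v)) =
      σ * lam j x + (1 - σ) / ((n : ℝ) + 1) := by
  rw [AffineMap.apply_add_smul_sub, hlam.apply_centroid, mul_one_div]

end IsLagrangeBasis

end Lagrange

section QuasiRigid

variable {n : ℕ} {v : Fin (n + 1) → EuclideanSpace ℝ (Fin n)}
  {lam : Fin (n + 1) → EuclideanSpace ℝ (Fin n) →ᵃ[ℝ] ℝ}
  {l : Fin n → Fin (n + 1) → ℝ} {b : Fin (n + 1) → ℝ}

theorem coeff_eq_sub (hcoef : ∀ j x, lam j x = (∑ i : Fin n, l i j * x i) + b j)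
    (i : Fin n) (j : Fin (n + 1)) :
    l i j = lam j (EuclideanSpace.single i 1) - lam j 0 := by
  simp [hcoef]

theorem apply_cubeCenter_eq (hcoef : ∀ j x, lam j x = (∑ i : Fin n, l i j * x i) + b j)
    (j : Fin (n + 1)) :
    lam j (cubeCenter n) = ((∑ i, (l i j)⁺ + b j) - (∑ i, (l i j)⁻ - b j)) / 2 := by
  have h : ∑ i, l i j = ∑ i, (l i j)⁺ - ∑ i, (l i j)⁻ := by
    rw [← Finset.sum_sub_distrib]
    simp only [posPart_sub_negPart]
  rw [hcoef]
  simp only [cubeCenter_apply, ← Finset.sum_mul, h]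
  ring

namespace IsLagrangeBasis

theorem sum_const_eq_one (hlam : IsLagrangeBasis v lam) (hv : AffineIndependent ℝ v)
    (hcoef : ∀ j x, lam j x = (∑ i : Fin n, l i j * x i) + b j) : ∑ j, b j = 1 := by
  simpa [hcoef] using hlam.sum_eq_one hv 0

theorem sum_coeff_eq_zero (hlam : IsLagrangeBasis v lam) (hv : AffineIndependent ℝ v)
    (hcoef : ∀ j x, lam j x = (∑ i : Fin n, l i j * x i) + b j) (i : Fin n) :
    ∑ j, l i j = 0 := by
  simp [coeff_eq_sub hcoef, hlam.sum_eq_one hv]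

theorem sum_coeff_mul_vertex_eq_one (hlam : IsLagrangeBasis v lam) (hv : AffineIndependent ℝ v)
    (hcoef : ∀ j x, lam j x = (∑ i : Fin n, l i j * x i) + b j) (i : Fin n) :
    ∑ j, l i j * v j i = 1 := by
  have coord_eq (x : EuclideanSpace ℝ (Fin n)) : ∑ j, lam j x * v j i = x i := by
    simpa only [WithLp.ofLp_sum, Finset.sum_apply, PiLp.smul_apply, smul_eq_mul]
      using congrArg (· i) (hlam.sum_smul_eq hv x)
  simp [coeff_eq_sub hcoef, sub_mul, coord_eq]

theorem neg_apply_le_of_unitCube_subset (hlam : IsLagrangeBasis v lam)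
    (hv : AffineIndependent ℝ v) (hQ : unitCube n ⊆ simplexHomothet v n)
    {x : EuclideanSpace ℝ (Fin n)} (hx : x ∈ unitCube n) (j : Fin (n + 1)) :
    -(lam j x) ≤ ((n : ℝ) - 1) / ((n : ℝ) + 1) := by
  obtain ⟨w, hw, rfl⟩ := hQ hx
  have hnonneg : 0 ≤ (n : ℝ) * lam j w :=
    mul_nonneg n.cast_nonneg ((hlam.mem_simplexSet_iff hv).mp hw j)
  rw [hlam.apply_homothet_centroid, ← neg_sub (n : ℝ), neg_div]
  linarith

theorem coeff_sums_eq (hlam : IsLagrangeBasis v lam) (hv : AffineIndependent ℝ v)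
    (hcoef : ∀ j x, lam j x = (∑ i : Fin n, l i j * x i) + b j)
    (hS : simplexSet v ⊆ unitCube n) (hQ : unitCube n ⊆ simplexHomothet v n) :
    (∀ i, ∑ j, (l i j)⁺ = 1) ∧ (∀ j, ∑ i, (l i j)⁺ + b j = 1) ∧
      ∀ j, ∑ i, (l i j)⁻ - b j = ((n : ℝ) - 1) / ((n : ℝ) + 1) := by
  have hvQ (j : Fin (n + 1)) : v j ∈ unitCube n :=
    hS (subset_convexHull ℝ _ (Set.mem_range_self j))
  refine coeff_sums_eq_of_bounds (hlam.sum_const_eq_one hv hcoef)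
    (hlam.sum_coeff_eq_zero hv hcoef) (fun i => ?_) (fun j => ?_) (fun j => ?_)
  · calc (1 : ℝ) = ∑ j, l i j * v j i := (hlam.sum_coeff_mul_vertex_eq_one hv hcoef i).symm
      _ ≤ ∑ j, (l i j)⁺ := sum_mul_le_sum_posPart _ _ fun j => hvQ j i
  · calc (1 : ℝ) = lam j (v j) := by simp [hlam j j]
      _ ≤ ∑ i, (l i j)⁺ + b j := le_sum_posPart_of_mem_unitCube (hcoef j) (hvQ j)
  · obtain ⟨x, hx, hxval⟩ := (isGreatest_neg_image_cubeVertices (hcoef j)).1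
    rw [← hxval]
    exact hlam.neg_apply_le_of_unitCube_subset hv hQ (cubeVertices_subset_unitCube hx) j

theorem simplexCentroid_eq_cubeCenter (hlam : IsLagrangeBasis v lam) (hv : AffineIndependent ℝ v)
    (hcoef : ∀ j x, lam j x = (∑ i : Fin n, l i j * x i) + b j)
    (hmax : ∀ j, ∑ i, (l i j)⁺ + b j = 1)
    (hmin : ∀ j, ∑ i, (l i j)⁻ - b j = ((n : ℝ) - 1) / ((n : ℝ) + 1)) :
    simplexCentroid v = cubeCenter n :=
  hlam.ext hv fun j => by
    rw [hlam.apply_centroid, apply_cubeCenter_eq hcoef, hmax, hmin]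
    field_simp
    ring

end IsLagrangeBasis

end QuasiRigid

/-- Theorem 6.1: If `S ⊆ Q_n ⊆ nS`, then (i) `max_{ver Q_n} λ_j = 1`,
(ii) `max_{ver Q_n}(−λ_j) = (n−1)/(n+1)`, (iii) the centroid of `S` is `(1/2,…,1/2)`,
(iv) `Σ_j |l_{ij}| = 2`, (v) `Σ_i |l_{ij}| = 2n/(n+1)`,
(vi) `(1/n)Q_n ⊆ S` and `nS ⊆ n²Q_n`. -/
theorem quasi_rigid_simplex_properties (n : ℕ) (hn : 0 < n)
    (v : Fin (n + 1) → EuclideanSpace ℝ (Fin n)) (hv : AffineIndependent ℝ v)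
    (hS : simplexSet v ⊆ unitCube n) (hQ : unitCube n ⊆ simplexHomothet v n)
    (l : Fin n → Fin (n + 1) → ℝ) (b : Fin (n + 1) → ℝ)
    (lam : Fin (n + 1) → (EuclideanSpace ℝ (Fin n) →ᵃ[ℝ] ℝ))
    (hlam : IsLagrangeBasis v lam)
    (hcoef : ∀ j x, lam j x = (∑ i : Fin n, l i j * x i) + b j) :
    (∀ j, sSup ((fun x => lam j x) '' cubeVertices n) = 1) ∧
    (∀ j, sSup ((fun x => -(lam j x)) '' cubeVertices n) = ((n : ℝ) - 1) / ((n : ℝ) + 1)) ∧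
    (∀ i, simplexCentroid v i = 1 / 2) ∧
    (∀ i, ∑ j : Fin (n + 1), |l i j| = 2) ∧
    (∀ j, ∑ i : Fin n, |l i j| = 2 * (n : ℝ) / ((n : ℝ) + 1)) ∧
    homothet ((2 : ℝ)⁻¹ • ∑ i : Fin n, EuclideanSpace.single i (1 : ℝ))
        (1 / (n : ℝ)) (unitCube n) ⊆ simplexSet v ∧
    simplexHomothet v n ⊆
      homothet ((2 : ℝ)⁻¹ • ∑ i : Fin n, EuclideanSpace.single i (1 : ℝ))
        ((n : ℝ) ^ 2) (unitCube n) := by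
  obtain ⟨hrow, hmax, hmin⟩ := hlam.coeff_sums_eq hv hcoef hS hQ
  have hcenter := hlam.simplexCentroid_eq_cubeCenter hv hcoef hmax hmin
  rw [simplexHomothet, hcenter] at hQ ⊢
  refine ⟨fun j => ?_, fun j => ?_, cubeCenter_apply, fun i => ?_,
    fun j => ?_, homothet_inv_subset_of_subset_homothet (by positivity) hQ, ?_⟩
  · rw [← hmax j]
    exact (isGreatest_image_cubeVertices (hcoef j)).csSup_eq
  · rw [← hmin j]
    exact (isGreatest_neg_image_cubeVertices (hcoef j)).csSup_eq
  · rw [sum_abs_eq_sum_posPart_add_sum_negPart,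
      sum_negPart_eq_sum_posPart (hlam.sum_coeff_eq_zero hv hcoef i), hrow]
    norm_num
  · rw [sum_abs_eq_sum_posPart_add_sum_negPart,
      show ∀ p q : ℝ, p + q = (p + b j) + (q - b j) by intros; ring, hmax, hmin]
    field_simp
    ring
  · calc homothet (cubeCenter n) n (simplexSet v)
        ⊆ homothet (cubeCenter n) n (homothet (cubeCenter n) n (unitCube n)) :=
          homothet_mono (hS.trans (subset_homothet_of_one_le convex_unitCube
            cubeCenter_mem_unitCube (by exact_mod_cast hn)))
      _ = homothet (cubeCenter n) ((n : ℝ) ^ 2) (unitCube n) := by rw [homothet_homothet, sq]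
end
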